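/- With (φ, ψ) a smooth real-valued solution of the elliptic system −φ'' + (4−ω²)φ = 6φ³ + 6φ²ψ + 12φψ², −ψ'' + (4−9ω²)ψ = 2φ³ + 12φ²ψ + 6ψ³, and 𝓗 the linearized 4×4 operator of equation (212), the vector (0, φ, 0, 3ψ)ᵀ lies in the kernel of 𝓗. -/

import Mathlib

/-- The phase mode (0, φ, 0, 3ψ)ᵀ lies in the kernel of the linearized operator 𝓗. -/
theorem stmt11 (ω : ℝ) (φ ψ : ℝ → ℝ)
    (hφ : ContDiff ℝ (⊤ : ℕ∞) φ) (hψ : ContDiff ℝ (⊤ : ℕ∞) ψ)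
    (h1 : ∀ x, -(deriv (deriv φ) x) + (4 - ω ^ 2) * φ x
      - (6 * (φ x) ^ 3 + 6 * (φ x) ^ 2 * ψ x + 12 * φ x * (ψ x) ^ 2) = 0)
    (h2 : ∀ x, -(deriv (deriv ψ) x) + (4 - 9 * ω ^ 2) * ψ x
      - (2 * (φ x) ^ 3 + 12 * (φ x) ^ 2 * ψ x + 6 * (ψ x) ^ 3) = 0) :
    (∀ x, -(deriv (deriv (fun z => (0 : ℝ))) x) + (4 - ω ^ 2) * 0
      - (18 * (φ x) ^ 2 + 12 * (ψ x) ^ 2 + 12 * φ x * ψ x) * 0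
      + (-(24 * φ x * ψ x) - 6 * (φ x) ^ 2) * 0 = 0)
    ∧ (∀ x, -(deriv (deriv φ) x) + (4 - ω ^ 2) * φ x
      - (6 * (φ x) ^ 2 + 12 * (ψ x) ^ 2 - 12 * φ x * ψ x) * φ x
      + (-(6 * (φ x) ^ 2)) * (3 * ψ x) = 0)
    ∧ (∀ x, -(deriv (deriv (fun z => (0 : ℝ))) x) + (4 - 9 * ω ^ 2) * 0
      - (12 * (φ x) ^ 2 + 18 * (ψ x) ^ 2) * 0
      + (-(24 * φ x * ψ x) - 6 * (φ x) ^ 2) * 0 = 0)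
    ∧ (∀ x, -(deriv (deriv (fun z => 3 * ψ z)) x) + (4 - 9 * ω ^ 2) * (3 * ψ x)
      - (12 * (φ x) ^ 2 + 6 * (ψ x) ^ 2) * (3 * ψ x)
      + (-(6 * (φ x) ^ 2)) * φ x = 0) := by
  have hψ' : Differentiable ℝ ψ := hψ.differentiable (by simp)
  have hψ'' : Differentiable ℝ (deriv ψ) :=
    by
    have h2 : ContDiff ℝ 2 ψ := hψ.of_le (WithTop.coe_le_coe.mpr le_top)
    exact (contDiff_succ_iff_deriv (n := 1).mp h2).2.2.differentiable one_ne_zero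
  have hd : deriv (fun z => 3 * ψ z) = fun z => 3 * deriv ψ z := by
    funext z
    simp [deriv_const_mul _ (hψ'.differentiableAt)]
  have hdd : ∀ x, deriv (deriv (fun z => 3 * ψ z)) x = 3 * deriv (deriv ψ) x := by
    intro x
    rw [hd]
    simp [deriv_const_mul _ (hψ''.differentiableAt)]
  refine ⟨fun x => by simp, fun x => by nlinarith [h1 x], fun x => by simp,
    fun x => by rw [hdd x]; nlinarith [h2 x]⟩
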